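/- Let k be a field and a < b, c < d in ℝ. The graded internal hom of one-parameter interval modules satisfies Hom_underline(k[a,b), k[c,d)) ≅ k[max{c−a, d−b}, d−a). -/

import Mathlib

open CategoryTheory

noncomputable section
attribute [local instance] Classical.propDecidable
set_option linter.unusedSectionVars false

variable (R : Type) [Ring R] {P : Type} [Preorder P]

/-- Condition that a subset is order-convex. -/
def IsConvexSet (I : Set P) : Prop := ∀ ⦃x y z : P⦄, x ∈ I → z ∈ I → x ≤ y → y ≤ z → y ∈ I

/-- The value of the interval persistence module at a point. -/
def intervalObj (I : Set P) (a : P) : Submodule R R :=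
  if a ∈ I then (⊤ : Submodule R R) else ⊥

lemma intervalObj_eq_zero {I : Set P} {a : P} (h : a ∉ I) (x : intervalObj R I a) :
    x = 0 := by
  have hx := x.2
  simp only [intervalObj, if_neg h, Submodule.mem_bot] at hx
  exact Subtype.ext hx

/-- The structure map of the interval module between two degrees. -/
def intervalMapAux (I : Set P) (a b : P) :
    (intervalObj R I a) →ₗ[R] (intervalObj R I b) :=
  if h : a ∈ I ∧ b ∈ I then
    Submodule.inclusion (by simp [intervalObj, h.1, h.2])
  else 0

lemma intervalMapAux_coe {I : Set P} {a b : P} (ha : a ∈ I) (hb : b ∈ I)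
    (x : intervalObj R I a) : ((intervalMapAux R I a b x : R)) = (x : R) := by
  simp [intervalMapAux, ha, hb]

lemma intervalMapAux_of_not {I : Set P} {a b : P} (h : ¬(a ∈ I ∧ b ∈ I))
    (x : intervalObj R I a) : intervalMapAux R I a b x = 0 := by
  simp [intervalMapAux, h]

/-- The interval (indicator) persistence module of a convex set `I`,
as a functor from the preorder `P` to `R`-modules. -/
def intervalModule (I : Set P) (hI : IsConvexSet I) : P ⥤ ModuleCat R where
  obj a := ModuleCat.of R (intervalObj R I a)
  map {a b} f := ModuleCat.ofHom (intervalMapAux R I a b)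
  map_id a := by
    ext x : 2
    by_cases h : a ∈ I
    · exact Subtype.ext (intervalMapAux_coe R h h x)
    · rw [intervalObj_eq_zero R h x]
      simp
  map_comp {a b c} f g := by
    ext x : 2
    show intervalMapAux R I a c x = intervalMapAux R I b c (intervalMapAux R I a b x)
    by_cases ha : a ∈ I
    · by_cases hc : c ∈ I
      · have hb : b ∈ I := hI ha hc (leOfHom f) (leOfHom g)
        apply Subtype.ext
        rw [intervalMapAux_coe R ha hc, intervalMapAux_coe R hb hc,
          intervalMapAux_coe R ha hb]
      · rw [intervalMapAux_of_not R (fun h => hc h.2),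
          intervalMapAux_of_not R (fun h => hc h.2)]
    · rw [intervalObj_eq_zero R ha x]
      simp

end

lemma IsConvexSet.of_ordConnected {P : Type} [Preorder P] {s : Set P}
    (h : s.OrdConnected) : IsConvexSet s :=
  fun _ _ _ hx hz hxy hyz => h.out hx hz ⟨hxy, hyz⟩

open CategoryTheory

noncomputable section
variable (k : Type) [Field k]

/-- The translation functor `a ↦ a + s` on `(ℝ,≤)`. -/
def shiftFunctor' (s : ℝ) : ℝ ⥤ ℝ :=
  Monotone.functor (f := fun a => a + s) (fun _ _ h => add_le_add_left h s)

/-- For `s ≤ t`, the canonical natural transformation `N(s) ⟶ N(t)` between shifts. -/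
def shiftTrans (N : ℝ ⥤ ModuleCat k) {s t : ℝ} (h : s ≤ t) :
    shiftFunctor' s ⋙ N ⟶ shiftFunctor' t ⋙ N where
  app a := N.map (homOfLE (add_le_add_right h a))
  naturality {a b} f := by
    dsimp [shiftFunctor']
    rw [← N.map_comp, ← N.map_comp]
    congr 1

lemma shiftTrans_eq_id (N : ℝ ⥤ ModuleCat k) {s : ℝ} (h : s ≤ s) :
    shiftTrans k N h = 𝟙 _ := by
  apply NatTrans.ext
  funext a
  show N.map (homOfLE (add_le_add_right h a)) = _
  rw [show (homOfLE (add_le_add_right h a) : a + s ⟶ a + s) = 𝟙 (a + s) from rfl, N.map_id]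
  rfl

lemma shiftTrans_comp (N : ℝ ⥤ ModuleCat k) {s t u : ℝ} (h : s ≤ t) (h' : t ≤ u)
    (h'' : s ≤ u) :
    shiftTrans k N h ≫ shiftTrans k N h' = shiftTrans k N h'' := by
  apply NatTrans.ext
  funext a
  rw [NatTrans.comp_app]
  show N.map (homOfLE (add_le_add_right h a)) ≫ N.map (homOfLE (add_le_add_right h' a)) =
    N.map (homOfLE (add_le_add_right h'' a))
  rw [← N.map_comp]
  congr 1

/-- The graded internal hom of persistence modules:
`Hom(M,N)_s = Hom(M, N(s))`, the space of natural transformations into the shift. -/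
def homUnderline (M N : ℝ ⥤ ModuleCat k) : ℝ ⥤ ModuleCat k where
  obj s := ModuleCat.of k (M ⟶ shiftFunctor' s ⋙ N)
  map {s t} f := ModuleCat.ofHom
    { toFun := fun α => α ≫ shiftTrans k N (leOfHom f)
      map_add' := fun α β => Preadditive.add_comp _ _ _ _ _ _
      map_smul' := fun c α => Linear.smul_comp _ _ _ _ _ _ }
  map_id s := by
    ext α : 2
    show α ≫ shiftTrans k N (leOfHom (𝟙 s)) = α
    rw [shiftTrans_eq_id, Category.comp_id]
  map_comp {s t u} f g := by
    ext α : 2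
    show α ≫ shiftTrans k N (leOfHom (f ≫ g)) =
      (α ≫ shiftTrans k N (leOfHom f)) ≫ shiftTrans k N (leOfHom g)
    rw [Category.assoc, shiftTrans_comp k N (leOfHom f) (leOfHom g) (leOfHom (f ≫ g))]

end


/-! An interval module `k[I]` whose interval has a least element `a` is generated by `1 ∈ k[I]_a`,
so a morphism `k[I] ⟶ N` is the same as a vector `v ∈ N_a` killed by every structure map
`N_{a ≤ y}` with `y ∉ I`. For `I = [a, b)` and `N = k[c, d)(s)` such a `v` lives in
`k[c, d)_{a+s}`, which is nonzero iff `s ∈ [c - a, d - a)`, and a nonzero `v` is killed by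
`N_{a ≤ b}` iff `b + s ∉ [c, d)`, i.e. `s ≥ d - b`. Evaluation at the generator thus
identifies `Hom(k[a, b), k[c, d)(s))` with `k[max (c - a) (d - b), d - a)_s`, compatibly with
the shifts. -/

noncomputable section

section IntervalModule

variable {R : Type} [Ring R] {P : Type} {I : Set P}

lemma mem_intervalObj_iff {x : P} {t : R} : t ∈ intervalObj R I x ↔ x ∈ I ∨ t = 0 := by
  by_cases hx : x ∈ I <;> simp [intervalObj, hx]

variable (R) in
def intervalGen {x : P} (hx : x ∈ I) : intervalObj R I x :=
  ⟨1, mem_intervalObj_iff.2 (.inl hx)⟩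

@[simp] lemma coe_intervalGen {x : P} (hx : x ∈ I) : (intervalGen R hx : R) = 1 := rfl

lemma eq_smul_intervalGen {x : P} (hx : x ∈ I) (v : intervalObj R I x) :
    v = (v : R) • intervalGen R hx :=
  Subtype.ext (mul_one _).symm

variable [Preorder P]

lemma intervalMapAux_intervalGen {x y : P} (hx : x ∈ I) (hy : y ∈ I) :
    intervalMapAux R I x y (intervalGen R hx) = intervalGen R hy :=
  Subtype.ext (intervalMapAux_coe R hx hy _)

namespace intervalModule

variable {hI : IsConvexSet I} {N : P ⥤ ModuleCat R}

lemma app_eq_smul_map_app_intervalGen (α : intervalModule R I hI ⟶ N) {a x : P}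
    (ha : a ∈ I) (hx : x ∈ I) (hax : a ≤ x) (v : intervalObj R I x) :
    α.app x v = (v : R) • N.map (homOfLE hax) (α.app a (intervalGen R ha)) := by
  have hnat : α.app x (intervalGen R hx) = N.map (homOfLE hax) (α.app a (intervalGen R ha)) := by
    rw [← intervalMapAux_intervalGen ha hx]
    exact ConcreteCategory.congr_hom (α.naturality (homOfLE hax)) (intervalGen R ha)
  calc α.app x v = α.app x ((v : R) • intervalGen R hx) := congrArg _ (eq_smul_intervalGen hx v)
    _ = (v : R) • α.app x (intervalGen R hx) := map_smul _ _ _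
    _ = _ := by rw [hnat]

lemma map_app_intervalGen_eq_zero (α : intervalModule R I hI ⟶ N) {a y : P}
    (ha : a ∈ I) (hy : y ∉ I) (hay : a ≤ y) :
    N.map (homOfLE hay) (α.app a (intervalGen R ha)) = 0 := by
  have hnat := ConcreteCategory.congr_hom (α.naturality (homOfLE hay)) (intervalGen R ha)
  exact hnat.symm.trans ((congrArg (α.app y) (intervalObj_eq_zero R hy _)).trans (map_zero _))

lemma hom_ext_of_isLeast {a : P} (hmin : IsLeast I a) {α β : intervalModule R I hI ⟶ N}
    (h : α.app a (intervalGen R hmin.1) = β.app a (intervalGen R hmin.1)) : α = β := by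
  ext x v
  by_cases hx : x ∈ I
  · have hα := app_eq_smul_map_app_intervalGen α hmin.1 hx (hmin.2 hx) v
    have hβ := app_eq_smul_map_app_intervalGen β hmin.1 hx (hmin.2 hx) v
    rw [h] at hα
    exact hα.trans hβ.symm
  · rw [intervalObj_eq_zero R hx v]
    exact (map_zero _).trans (map_zero _).symm

section Lift

variable {a : P} (v : N.obj a)

open Classical in
def liftApp (x : P) : intervalObj R I x →ₗ[R] N.obj x :=
  if hax : a ≤ x then
    (LinearMap.toSpanSingleton R _ (N.map (homOfLE hax) v)).comp (intervalObj R I x).subtype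
  else 0

lemma liftApp_apply {x : P} (hax : a ≤ x) (u : intervalObj R I x) :
    liftApp v x u = (u : R) • N.map (homOfLE hax) v := by
  simp [liftApp, hax]

def lift (hmin : IsLeast I a) (hv : ∀ y (hay : a ≤ y), y ∉ I → N.map (homOfLE hay) v = 0) :
    intervalModule R I hI ⟶ N where
  app x := ModuleCat.ofHom (liftApp v x)
  naturality {x y} f := by
    refine ModuleCat.hom_ext (LinearMap.ext fun (u : intervalObj R I x) => ?_)
    change liftApp v y (intervalMapAux R I x y u) = N.map f (liftApp v x u)
    by_cases hx : x ∈ I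
    swap
    · simp only [intervalObj_eq_zero R hx u, map_zero]
    have hax := hmin.2 hx
    have hay := hax.trans (leOfHom f)
    rw [liftApp_apply v hay, liftApp_apply v hax, map_smul, ← ConcreteCategory.comp_apply,
      ← N.map_comp, Subsingleton.elim (homOfLE hax ≫ f) (homOfLE hay)]
    by_cases hy : y ∈ I
    · rw [intervalMapAux_coe R hx hy]
    · rw [intervalMapAux_of_not R (fun h => hy h.2), hv y hay hy, smul_zero, smul_zero]

lemma lift_app_intervalGen (hmin : IsLeast I a)
    (hv : ∀ y (hay : a ≤ y), y ∉ I → N.map (homOfLE hay) v = 0) :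
    (lift (hI := hI) v hmin hv).app a (intervalGen R hmin.1) = v := by
  change liftApp v a (intervalGen R hmin.1) = v
  rw [liftApp_apply v le_rfl, coe_intervalGen, one_smul]
  exact ConcreteCategory.congr_hom (N.map_id a) v

end Lift

end intervalModule

end IntervalModule

abbrev icoModule (k : Type) [Field k] (x y : ℝ) : ℝ ⥤ ModuleCat k :=
  intervalModule k (Set.Ico x y) (.of_ordConnected Set.ordConnected_Ico)

namespace icoModule

variable {k : Type} [Field k] {a b c d : ℝ}

lemma left_add_mem_Ico {s : ℝ} (hs : s ∈ Set.Ico (max (c - a) (d - b)) (d - a)) :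
    a + s ∈ Set.Ico c d :=
  ⟨by linarith [le_max_left (c - a) (d - b), hs.1], by linarith [hs.2]⟩

lemma app_intervalGen_eq_zero (hab : a < b) {s : ℝ}
    (hs : s ∉ Set.Ico (max (c - a) (d - b)) (d - a))
    (α : icoModule k a b ⟶ shiftFunctor' s ⋙ icoModule k c d) :
    α.app a (intervalGen k (Set.left_mem_Ico.2 hab)) = 0 := by
  by_cases has : a + s ∈ Set.Ico c d
  swap
  · exact intervalObj_eq_zero k has _
  have hsb : s < d - b := by
    by_contra! h
    exact hs ⟨max_le (by linarith [has.1]) h, by linarith [has.2]⟩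
  have hbs : b + s ∈ Set.Ico c d := ⟨by linarith [has.1], by linarith⟩
  have hvanish := intervalModule.map_app_intervalGen_eq_zero α (Set.left_mem_Ico.2 hab)
    Set.right_notMem_Ico hab.le
  apply Subtype.ext
  exact (intervalMapAux_coe k has hbs _).symm.trans (congrArg Subtype.val hvanish)

lemma mem_intervalObj_add {s : ℝ} (w : intervalObj k (Set.Ico (max (c - a) (d - b)) (d - a)) s) :
    (w : k) ∈ intervalObj k (Set.Ico c d) (a + s) :=
  mem_intervalObj_iff.2 ((mem_intervalObj_iff.1 w.2).imp_left left_add_mem_Ico)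

lemma intervalMapAux_eq_zero_of_notMem_Ico {s y : ℝ}
    (w : intervalObj k (Set.Ico (max (c - a) (d - b)) (d - a)) s) (hay : a ≤ y)
    (hy : y ∉ Set.Ico a b) :
    intervalMapAux k (Set.Ico c d) (a + s) (y + s) ⟨w, mem_intervalObj_add w⟩ = 0 := by
  by_cases h : a + s ∈ Set.Ico c d ∧ y + s ∈ Set.Ico c d
  · have hby : b ≤ y := not_lt.1 fun hyb => hy ⟨hay, hyb⟩
    have hs : s ∉ Set.Ico (max (c - a) (d - b)) (d - a) := fun hs =>
      absurd h.2.2 (by linarith [le_max_right (c - a) (d - b), hs.1])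
    exact Subtype.ext ((intervalMapAux_coe k h.1 h.2 _).trans
      ((mem_intervalObj_iff.1 w.2).resolve_left hs))
  · exact intervalMapAux_of_not k h _

def homMk (hab : a < b) {s : ℝ} (w : intervalObj k (Set.Ico (max (c - a) (d - b)) (d - a)) s) :
    icoModule k a b ⟶ shiftFunctor' s ⋙ icoModule k c d :=
  intervalModule.lift (a := a) ⟨w, mem_intervalObj_add w⟩ (isLeast_Ico hab)
    fun _ hay hy => intervalMapAux_eq_zero_of_notMem_Ico w hay hy

def homEquiv (hab : a < b) (s : ℝ) :
    (icoModule k a b ⟶ shiftFunctor' s ⋙ icoModule k c d) ≃ₗ[k]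
      intervalObj k (Set.Ico (max (c - a) (d - b)) (d - a)) s where
  toFun α := ⟨Subtype.val (p := (· ∈ intervalObj k (Set.Ico c d) (a + s)))
      (α.app a (intervalGen k (Set.left_mem_Ico.2 hab))),
    mem_intervalObj_iff.2 <| (em _).imp_right fun hs =>
      congrArg Subtype.val (app_intervalGen_eq_zero hab hs α)⟩
  map_add' _ _ := rfl
  map_smul' _ _ := rfl
  invFun := homMk hab
  left_inv α := intervalModule.hom_ext_of_isLeast (isLeast_Ico hab)
    (intervalModule.lift_app_intervalGen _ _ _)
  right_inv w := by
    have h : (homMk hab w).app a (intervalGen k (Set.left_mem_Ico.2 hab)) =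
        (⟨w, mem_intervalObj_add w⟩ : intervalObj k (Set.Ico c d) (a + s)) :=
      intervalModule.lift_app_intervalGen _ _ _
    have hval := congrArg Subtype.val h
    exact Subtype.ext hval

lemma coe_intervalMapAux_add_eq {s u : ℝ} (hu : u ∈ Set.Ico (max (c - a) (d - b)) (d - a))
    (v : intervalObj k (Set.Ico c d) (a + s))
    (w : intervalObj k (Set.Ico (max (c - a) (d - b)) (d - a)) s) (hvw : (v : k) = w) :
    (intervalMapAux k (Set.Ico c d) (a + s) (a + u) v : k) = intervalMapAux k _ s u w := by
  by_cases hs : s ∈ Set.Ico (max (c - a) (d - b)) (d - a)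
  · rw [intervalMapAux_coe k (left_add_mem_Ico hs) (left_add_mem_Ico hu),
      intervalMapAux_coe k hs hu, hvw]
  · obtain rfl : w = 0 := intervalObj_eq_zero k hs w
    obtain rfl : v = 0 := Subtype.ext hvw
    simp only [map_zero, ZeroMemClass.coe_zero]

lemma homEquiv_naturality (hab : a < b) {s u : ℝ} (f : s ⟶ u)
    (α : icoModule k a b ⟶ shiftFunctor' s ⋙ icoModule k c d) :
    homEquiv hab u ((homUnderline k (icoModule k a b) (icoModule k c d)).map f α) =
      (icoModule k (max (c - a) (d - b)) (d - a)).map f (homEquiv hab s α) := by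
  by_cases hu : u ∈ Set.Ico (max (c - a) (d - b)) (d - a)
  · exact Subtype.ext (coe_intervalMapAux_add_eq hu _ _ rfl)
  · exact (intervalObj_eq_zero k hu _).trans (intervalObj_eq_zero k hu _).symm

end icoModule

end

open CategoryTheory in
theorem homUnderline_interval_general (k : Type) [Field k] (a b c d : ℝ)
    (hab : a < b) :
    Nonempty
      (homUnderline k (intervalModule k (Set.Ico a b) (.of_ordConnected Set.ordConnected_Ico))
          (intervalModule k (Set.Ico c d) (.of_ordConnected Set.ordConnected_Ico)) ≅
        intervalModule k (Set.Ico (max (c - a) (d - b)) (d - a))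
          (.of_ordConnected Set.ordConnected_Ico)) :=
  ⟨NatIso.ofComponents
    (fun s => (icoModule.homEquiv (k := k) (c := c) (d := d) hab s).toModuleIso)
    fun f => ModuleCat.hom_ext (LinearMap.ext (icoModule.homEquiv_naturality hab f))⟩

open CategoryTheory in
/-- Graded internal hom of interval modules:
`Hom(k[a,b), k[c,d)) ≅ k[max{c−a, d−b}, d−a)`. -/
theorem homUnderline_interval (k : Type) [Field k] (a b c d : ℝ)
    (hab : a < b) (hcd : c < d) :
    Nonempty
      (homUnderline k (intervalModule k (Set.Ico a b) (.of_ordConnected Set.ordConnected_Ico))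
          (intervalModule k (Set.Ico c d) (.of_ordConnected Set.ordConnected_Ico)) ≅
        intervalModule k (Set.Ico (max (c - a) (d - b)) (d - a))
          (.of_ordConnected Set.ordConnected_Ico)) :=
  homUnderline_interval_general k a b c d hab
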